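/- Assume c̄ non-decreasing. Let I ⊆ [n] with |I| = Γ, and let I' = I ∪ J where J is any set of additional items all with c̄-value at least max_{j∈I} c̄_j, with |I'| ≤ n−1. Then Ψ(I) = Ψ(I'). In particular, once Γ items are queried, querying additional items with larger nominal cost does not change the worst-case objective. -/
import Mathlib


open Finset

/-- The DDID value of query set `I` for the 1-selection problem with objective uncertainty. -/
noncomputable def Psi (n Γ : ℕ) (cbar chat : Fin n → ℝ) (I : Finset (Fin n)) : ℝ :=
  ⨆ γ : {γ : Fin n → Bool // (Finset.univ.filter (fun i => γ i = true)).card ≤ Γ},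
    ⨅ j : Fin n,
      ⨆ δ : {δ : Fin n → Bool //
          (Finset.univ.filter (fun i => δ i = true)).card ≤ Γ ∧ ∀ i ∈ I, δ i = γ.1 i},
        cbar j + (if δ.1 j = true then chat j else 0)

private lemma fbdda {α : Type*} [Finite α] (f : α → ℝ) : BddAbove (Set.range f) :=
  (Set.finite_range f).bddAbove

private lemma fbddb {α : Type*} [Finite α] (f : α → ℝ) : BddBelow (Set.range f) :=
  (Set.finite_range f).bddBelow

theorem stmt5 (n Γ : ℕ) (hΓ : 1 ≤ Γ) (hn : 1 ≤ n) (cbar chat : Fin n → ℝ)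
    (hchat : ∀ j, 0 ≤ chat j) (hmono : Monotone cbar)
    (I J : Finset (Fin n)) (hI : I.card = Γ)
    (hJ : ∀ j ∈ J, cbar (I.max' (Finset.card_pos.mp (by rw [hI]; omega))) ≤ cbar j)
    (hcard : (I ∪ J).card ≤ n - 1) :
    Psi n Γ cbar chat I = Psi n Γ cbar chat (I ∪ J) := by
  haveI : Nonempty (Fin n) := ⟨⟨0, hn⟩⟩
  unfold Psi
  haveI : Nonempty {γ : Fin n → Bool //
      (Finset.univ.filter (fun i => γ i = true)).card ≤ Γ} :=
    ⟨⟨fun _ => false, by simp⟩⟩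
  apply le_antisymm
  · -- hard direction : Psi I ≤ Psi (I ∪ J)
    refine ciSup_le fun γ => ?_
    set γ' : Fin n → Bool := fun i => if i ∈ I then γ.1 i else false with hγ'def
    have hγ'card : (Finset.univ.filter (fun i => γ' i = true)).card ≤ Γ := by
      refine le_trans (Finset.card_le_card ?_) γ.2
      intro i hi
      simp only [mem_filter, mem_univ, true_and, γ'] at hi ⊢
      by_cases h : i ∈ I
      · simpa [h] using hi
      · simp [h] at hi
    haveI hne1 : Nonempty {δ : Fin n → Bool //
        (Finset.univ.filter (fun i => δ i = true)).card ≤ Γ ∧ ∀ i ∈ I, δ i = γ.1 i} :=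
      ⟨⟨γ.1, γ.2, fun _ _ => rfl⟩⟩
    haveI hne2 : Nonempty {δ : Fin n → Bool //
        (Finset.univ.filter (fun i => δ i = true)).card ≤ Γ ∧
          ∀ i ∈ I ∪ J, δ i = (⟨γ', hγ'card⟩ :
            {g : Fin n → Bool // (Finset.univ.filter (fun i => g i = true)).card ≤ Γ}).1 i} :=
      ⟨⟨γ', hγ'card, fun _ _ => rfl⟩⟩
    refine le_trans ?_ (le_ciSup (fbdda _) (⟨γ', hγ'card⟩ :
      {g : Fin n → Bool // (Finset.univ.filter (fun i => g i = true)).card ≤ Γ}))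
    refine le_ciInf fun j => ?_
    have hmemγ' : ∀ i ∈ I ∪ J, γ' i = γ' i := fun _ _ => rfl
    by_cases hjI : j ∈ I
    · refine le_trans (ciInf_le (fbddb _) j) ?_
      refine le_trans (ciSup_le fun δ => le_of_eq (by rw [δ.2.2 j hjI])) ?_
      refine le_ciSup_of_le (fbdda _) ⟨γ', hγ'card, fun _ _ => rfl⟩ (le_of_eq ?_)
      simp [γ', hjI]
    · by_cases hjJ : j ∈ J
      · -- j ∈ J \ I
        have hterm : cbar j ≤ ⨆ δ : {δ : Fin n → Bool //
            (Finset.univ.filter (fun i => δ i = true)).card ≤ Γ ∧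
              ∀ i ∈ I ∪ J, δ i = γ' i},
            cbar j + (if δ.1 j = true then chat j else 0) := by
          refine le_ciSup_of_le (fbdda _) ⟨γ', hγ'card, fun _ _ => rfl⟩ (le_of_eq ?_)
          simp [γ', hjI]
        by_cases hall : ∀ i ∈ I, γ.1 i = true
        · refine le_trans (ciInf_le (fbddb _) j) (le_trans (ciSup_le fun δ => ?_) hterm)
          have hsub : I ⊆ Finset.univ.filter (fun i => δ.1 i = true) := fun i hi => by
            simp [mem_filter, δ.2.2 i hi, hall i hi]
          have heq : I = Finset.univ.filter (fun i => δ.1 i = true) :=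
            Finset.eq_of_subset_of_card_le hsub (by rw [hI]; exact δ.2.1)
          have hδj : δ.1 j = false := by
            by_contra h
            have h' : δ.1 j = true := by simpa using h
            exact hjI (by rw [heq]; exact mem_filter.mpr ⟨mem_univ j, h'⟩)
          simp [hδj]
        · push_neg at hall
          obtain ⟨i0, hi0I, hi0⟩ := hall
          have hi0' : γ.1 i0 = false := by simpa using hi0
          have h2 : (⨆ δ : {δ : Fin n → Bool //
              (Finset.univ.filter (fun i => δ i = true)).card ≤ Γ ∧ ∀ i ∈ I, δ i = γ.1 i},
              cbar i0 + (if δ.1 i0 = true then chat i0 else 0)) ≤ cbar i0 := by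
            refine ciSup_le fun δ => ?_
            rw [δ.2.2 i0 hi0I, hi0']
            simp
          have h3 : cbar i0 ≤ cbar j :=
            le_trans (hmono (I.le_max' i0 hi0I)) (hJ j hjJ)
          exact le_trans (ciInf_le (fbddb _) i0) (le_trans h2 (le_trans h3 hterm))
      · -- j ∉ I ∪ J
        refine le_trans (ciInf_le (fbddb _) j) (ciSup_le fun δ => ?_)
        set δ' : Fin n → Bool := fun i => if i ∈ J ∧ i ∉ I then false else δ.1 i with hδ'def
        have hδ'card : (Finset.univ.filter (fun i => δ' i = true)).card ≤ Γ := by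
          refine le_trans (Finset.card_le_card ?_) δ.2.1
          intro i hi
          simp only [mem_filter, mem_univ, true_and, δ'] at hi ⊢
          by_cases h : i ∈ J ∧ i ∉ I
          · simp [h] at hi
          · simpa [h] using hi
        have hδ'agree : ∀ i ∈ I ∪ J, δ' i = γ' i := by
          intro i hi
          by_cases h : i ∈ I
          · have : ¬(i ∈ J ∧ i ∉ I) := fun hc => hc.2 h
            simp [δ', γ', this, h, δ.2.2 i h]
          · have hiJ : i ∈ J := by
              rcases mem_union.mp hi with h' | h'
              · exact absurd h' h
              · exact h'
            simp [δ', γ', h, hiJ]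
        refine le_ciSup_of_le (fbdda _) ⟨δ', hδ'card, hδ'agree⟩ (le_of_eq ?_)
        simp [δ', hjJ]
  · -- easy direction : Psi (I ∪ J) ≤ Psi I
    refine ciSup_le fun γ => ?_
    haveI hne1 : Nonempty {δ : Fin n → Bool //
        (Finset.univ.filter (fun i => δ i = true)).card ≤ Γ ∧ ∀ i ∈ I ∪ J, δ i = γ.1 i} :=
      ⟨⟨γ.1, γ.2, fun _ _ => rfl⟩⟩
    refine le_trans ?_ (le_ciSup (fbdda _) γ)
    refine le_ciInf fun j => ?_
    refine le_trans (ciInf_le (fbddb _) j) (ciSup_le fun δ => ?_)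
    exact le_ciSup_of_le (fbdda _) ⟨δ.1, δ.2.1, fun i hi => δ.2.2 i (mem_union_left _ hi)⟩
      (le_refl _)
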